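/- Let {G_n}_{n∈ω} be a tower of Hausdorff locally compact topological groups. Then τ_ind = τ_BS on G := ⋃_{n∈ω} G_n and this topology is a group topology; consequently (G, τ_ind) = glim G_n. -/

import Mathlib

open Topology Filter Set Pointwise

/-- The finite product `U k · U (k+1) ⋯ U (k+j)` of a sequence of subsets of a group. -/
def bsProd {G : Type*} [Group G] (U : ℕ → Set G) (k : ℕ) : ℕ → Set G
  | 0 => U k
  | j + 1 => bsProd U k j * U (k + (j + 1))

/-- `U⁺[k] = ⋃_{n ≥ k} U k · U (k+1) ⋯ U n`. -/
def bsPlus {G : Type*} [Group G] (U : ℕ → Set G) (k : ℕ) : Set G :=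
  ⋃ j, bsProd U k j

/-- The Bamboo-Shoot set `U[k] = (U⁺[k])⁻¹ · U⁺[k]`. -/
def bsU {G : Type*} [Group G] (U : ℕ → Set G) (k : ℕ) : Set G :=
  (bsPlus U k)⁻¹ * bsPlus U k

/-- A tower of topological groups inside an ambient (abstract) group `G`:
an increasing sequence of subgroups covering `G`, each carrying its own group topology,
such that all inclusions `G_n → G_{n+1}` are continuous. -/
structure GroupTower (G : Type*) [Group G] where
  H : ℕ → Subgroup G
  τ : ∀ n, TopologicalSpace (H n)
  topGroup : ∀ n, @IsTopologicalGroup (H n) (τ n) _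
  mono : ∀ n, H n ≤ H (n + 1)
  union : ∀ g : G, ∃ n, g ∈ H n
  incl_cont : ∀ n, Continuous[τ n, τ (n + 1)] (Subgroup.inclusion (mono n))

namespace GroupTower

variable {G : Type*} [Group G]

/-- The tower is closed: each `G_n` carries the subspace topology from `G_{n+1}`
and is closed in `G_{n+1}`. -/
def IsClosedTower (T : GroupTower G) : Prop :=
  ∀ n, T.τ n = (T.τ (n + 1)).induced (Subgroup.inclusion (T.mono n)) ∧
    IsClosed[T.τ (n + 1)] (Set.range (Subgroup.inclusion (T.mono n)))

/-- `U` (viewed as a subset of the ambient group) is an open symmetric neighborhood of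
the identity in `G_n`. -/
def NsMem (T : GroupTower G) (n : ℕ) (U : Set G) : Prop :=
  U ⊆ (T.H n : Set G) ∧ IsOpen[T.τ n] (((↑) : T.H n → G) ⁻¹' U) ∧ (1 : G) ∈ U ∧ U⁻¹ = U

/-- The Group Condition (GC). -/
def GC (T : GroupTower G) : Prop :=
  ∀ U : ℕ → Set G, (∀ n, T.NsMem n (U n)) → ∀ k : ℕ,
    ∃ V : ℕ → Set G, (∀ n, T.NsMem n (V n)) ∧ bsU V k ⊆ bsPlus U k

/-- `τBS` is the Bamboo-Shoot topology of the tower: at every point `g` the sets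
`g • U[k]` form a neighborhood base. -/
def IsBambooShoot (T : GroupTower G) (τBS : TopologicalSpace G) : Prop :=
  ∀ g : G, (@nhds G τBS g).HasBasis
    (fun p : (ℕ → Set G) × ℕ => ∀ n, T.NsMem n (p.1 n))
    (fun p => g • bsU p.1 p.2)

/-- `τind` is the inductive limit topology of the tower in the category of topological
spaces: a set is open iff its trace on every `G_n` is open. -/
def IsIndTop (T : GroupTower G) (τind : TopologicalSpace G) : Prop :=
  ∀ A : Set G, IsOpen[τind] A ↔ ∀ n, IsOpen[T.τ n] (((↑) : T.H n → G) ⁻¹' A)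

/-- `t` is a group topology on `G` making all the inclusions `G_n → G` continuous. -/
def IsCompatGroupTopology (T : GroupTower G) (t : TopologicalSpace G) : Prop :=
  @IsTopologicalGroup G t _ ∧ ∀ n, Continuous[T.τ n, t] ((↑) : T.H n → G)

/-- `t` coincides with `τ_gr`, i.e. `(G, t) = glim G_n` : `t` is a group topology making
all inclusions continuous, and it is the finest such topology (every open set of any
such topology is `t`-open). -/
def IsGLim (T : GroupTower G) (t : TopologicalSpace G) : Prop :=
  T.IsCompatGroupTopology t ∧
    ∀ t' : TopologicalSpace G, T.IsCompatGroupTopology t' →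
      ∀ A : Set G, IsOpen[t'] A → IsOpen[t] A

end GroupTower

/-- A topological space is Ascoli if every compact subset of `C_k(X, ℝ)` is
equicontinuous. -/
def IsAscoliSpace (X : Type*) [TopologicalSpace X] : Prop :=
  ∀ K : Set C(X, ℝ), IsCompact K → Equicontinuous fun f : K => (f.1 : X → ℝ)

/-- A family of sets is a k-network. -/
def IsKNetwork {X : Type*} [TopologicalSpace X] (N : Set (Set X)) : Prop :=
  ∀ K U : Set X, IsCompact K → IsOpen U → K ⊆ U →
    ∃ F : Set (Set X), F ⊆ N ∧ F.Finite ∧ K ⊆ ⋃₀ F ∧ ⋃₀ F ⊆ U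

/-- A family of sets is locally finite. -/
def IsLocallyFiniteFamily {X : Type*} [TopologicalSpace X] (N : Set (Set X)) : Prop :=
  ∀ x : X, ∃ V ∈ 𝓝 x, {s ∈ N | (s ∩ V).Nonempty}.Finite

/-- An ℵ-space: a regular space with a σ-locally finite k-network. -/
def IsAlephSpace (X : Type*) [TopologicalSpace X] : Prop :=
  RegularSpace X ∧ ∃ N : ℕ → Set (Set X),
    (∀ n, IsLocallyFiniteFamily (N n)) ∧ IsKNetwork (⋃ n, N n)

/-- An ℵ₀-space: a regular space with a countable k-network. -/
def IsAleph0Space (X : Type*) [TopologicalSpace X] : Prop :=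
  RegularSpace X ∧ ∃ N : Set (Set X), N.Countable ∧ IsKNetwork N

/-- A k_ω-space. -/
def IsKOmegaSpace (X : Type*) [TopologicalSpace X] : Prop :=
  ∃ K : ℕ → Set X, (∀ n, IsCompact (K n)) ∧ (∀ n, K n ⊆ K (n + 1)) ∧
    (⋃ n, K n) = Set.univ ∧
    ∀ A : Set X, IsClosed A ↔ ∀ n, IsClosed (((↑) : K n → X) ⁻¹' A)

/-- An MK_ω-space: a k_ω-space witnessed by metrizable compact sets. -/
def IsMKOmegaSpace (X : Type*) [TopologicalSpace X] : Prop :=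
  ∃ K : ℕ → Set X, (∀ n, IsCompact (K n)) ∧
    (∀ n, TopologicalSpace.MetrizableSpace (K n)) ∧ (∀ n, K n ⊆ K (n + 1)) ∧
    (⋃ n, K n) = Set.univ ∧
    ∀ A : Set X, IsClosed A ↔ ∀ n, IsClosed (((↑) : K n → X) ⁻¹' A)

section Generic
variable {H : Type*} [Group H] [TopologicalSpace H] [IsTopologicalGroup H]

lemma bamboo_conj_compact {K W : Set H} (hK : IsCompact K) (hW : W ∈ 𝓝 (1 : H)) :
    ∃ V ∈ 𝓝 (1 : H), ∀ k ∈ K, ∀ v ∈ V, k * v * k⁻¹ ∈ W := by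
  have hf : Continuous fun p : H × H => p.1 * p.2 * p.1⁻¹ := by fun_prop
  have hN : IsOpen ((fun p : H × H => p.1 * p.2 * p.1⁻¹) ⁻¹' interior W) :=
    hf.isOpen_preimage _ isOpen_interior
  have hsub : K ×ˢ ({1} : Set H) ⊆ (fun p : H × H => p.1 * p.2 * p.1⁻¹) ⁻¹' interior W := by
    rintro ⟨a, b⟩ ⟨-, hb⟩
    simp only [mem_singleton_iff] at hb
    subst hb
    simp only [mem_preimage, mul_one, mul_inv_cancel]
    exact mem_interior_iff_mem_nhds.2 hW
  obtain ⟨u, v, hu, hv, hKu, h1v, huv⟩ :=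
    generalized_tube_lemma hK isCompact_singleton hN hsub
  refine ⟨v, hv.mem_nhds (h1v rfl), fun k hk x hx => ?_⟩
  exact interior_subset (huv (show (k, x) ∈ u ×ˢ v from ⟨hKu hk, hx⟩))

lemma bamboo_sandwich2 [LocallyCompactSpace H] {K Ω : Set H} (hK : IsCompact K)
    (hΩ : IsOpen Ω) (h : K * K ⊆ Ω) :
    ∃ V, IsOpen V ∧ (1 : H) ∈ V ∧ V * K * V * (V * K * V) ⊆ Ω := by
  obtain ⟨V₁, hV₁n, hV₁⟩ := compact_open_separated_mul_left (hK.mul hK) hΩ h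
  obtain ⟨A, hAo, hA1, hA⟩ := exists_open_nhds_one_mul_subset hV₁n
  obtain ⟨V₂, hV₂o, hV₂1, hV₂⟩ := exists_open_nhds_one_mul_subset (hAo.mem_nhds hA1)
  have hV₂A : V₂ ⊆ A := fun x hx => by
    have := hV₂ (mul_mem_mul hx hV₂1); rwa [mul_one] at this
  have htriple : V₂ * V₂ * V₂ ⊆ V₁ := by
    intro x hx
    obtain ⟨y, hy, z, hz, rfl⟩ := hx
    exact hA (mul_mem_mul (hV₂ hy) (hV₂A hz))
  have hK'' : IsCompact (K ∪ K * K) := hK.union (hK.mul hK)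
  obtain ⟨V₃, hV₃, hV₃conj⟩ := bamboo_conj_compact hK'' (hV₂o.mem_nhds hV₂1)
  obtain ⟨V₄, hV₄o, hV₄1, hV₄⟩ := exists_open_nhds_one_mul_subset hV₃
  refine ⟨V₂ ∩ V₄ ∩ interior V₃, (hV₂o.inter hV₄o).inter isOpen_interior,
    ⟨⟨hV₂1, hV₄1⟩, mem_interior_iff_mem_nhds.2 hV₃⟩, ?_⟩
  set V := V₂ ∩ V₄ ∩ interior V₃ with hVdef
  have hVV₂ : V ⊆ V₂ := fun x hx => hx.1.1
  have hVV₄ : V ⊆ V₄ := fun x hx => hx.1.2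
  have hVV₃ : V ⊆ V₃ := fun x hx => interior_subset hx.2
  rintro x ⟨y, ⟨ya, ⟨v₁, hv₁, a, ha, rfl⟩, v₂, hv₂, rfl⟩,
    z, ⟨zb, ⟨v₃, hv₃, b, hb, rfl⟩, v₄, hv₄, rfl⟩, rfl⟩
  show v₁ * a * v₂ * (v₃ * b * v₄) ∈ Ω
  have key : v₁ * a * v₂ * (v₃ * b * v₄)
      = v₁ * (a * (v₂ * v₃) * a⁻¹) * (a * b * v₄ * (a * b)⁻¹) * (a * b) := by group
  rw [key]
  have hX : a * (v₂ * v₃) * a⁻¹ ∈ V₂ :=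
    hV₃conj a (Or.inl ha) _ (hV₄ (mul_mem_mul (hVV₄ hv₂) (hVV₄ hv₃)))
  have hY : a * b * v₄ * (a * b)⁻¹ ∈ V₂ :=
    hV₃conj (a * b) (Or.inr (mul_mem_mul ha hb)) v₄ (hVV₃ hv₄)
  refine hV₁ (mul_mem_mul ?_ (mul_mem_mul ha hb))
  exact htriple (mul_mem_mul (mul_mem_mul (hVV₂ hv₁) hX) hY)

lemma bamboo_exists_cpt_symm [LocallyCompactSpace H] [T2Space H] {U : Set H}
    (hU : U ∈ 𝓝 (1 : H)) :
    ∃ S : Set H, IsCompact S ∧ S⁻¹ = S ∧ S ∈ 𝓝 (1 : H) ∧ S ⊆ U := by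
  obtain ⟨s, hs𝓝, hsU, hscpt⟩ := LocallyCompactSpace.local_compact_nhds (1 : H) U hU
  have hsinv : s⁻¹ ∈ 𝓝 (1 : H) := by
    have h2 : Filter.Tendsto (fun x : H => x⁻¹) (𝓝 1) (𝓝 1) := by
      simpa using (continuous_inv.tendsto (1 : H))
    exact h2 hs𝓝
  refine ⟨s ∩ s⁻¹, hscpt.inter_right (hscpt.inv.isClosed), ?_, inter_mem hs𝓝 hsinv,
    (inter_subset_left).trans hsU⟩
  rw [Set.inter_inv, inv_inv, Set.inter_comm]

end Generic

section bsLemmas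
variable {G : Type*} [Group G] {U V : ℕ → Set G} {k : ℕ}

lemma bsProd_zero : bsProd U k 0 = U k := rfl

lemma bsProd_succ (j : ℕ) : bsProd U k (j + 1) = bsProd U k j * U (k + (j + 1)) := rfl

lemma bsProd_mono_fun (h : ∀ n, U n ⊆ V n) : ∀ j, bsProd U k j ⊆ bsProd V k j
  | 0 => h k
  | j + 1 => mul_subset_mul (bsProd_mono_fun h j) (h _)

lemma one_mem_bsProd (h : ∀ n, (1 : G) ∈ U n) : ∀ j, (1 : G) ∈ bsProd U k j
  | 0 => h k
  | j + 1 => by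
      have := mul_mem_mul (one_mem_bsProd h j) (h (k + (j + 1)))
      simpa [bsProd_succ] using this

lemma bsProd_subset_succ (h : ∀ n, (1 : G) ∈ U n) (j : ℕ) :
    bsProd U k j ⊆ bsProd U k (j + 1) := fun x hx => by
  have := mul_mem_mul hx (h (k + (j + 1)))
  simpa [bsProd_succ] using this

lemma bsProd_mono_idx (h : ∀ n, (1 : G) ∈ U n) {i j : ℕ} (hij : i ≤ j) :
    bsProd U k i ⊆ bsProd U k j := by
  induction j, hij using Nat.le_induction with
  | base => exact Subset.rfl
  | succ j hij ih => exact ih.trans (bsProd_subset_succ h j)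

lemma bsProd_subset_bsPlus (j : ℕ) : bsProd U k j ⊆ bsPlus U k :=
  Set.subset_iUnion (fun j => bsProd U k j) j

lemma one_mem_bsPlus (h : ∀ n, (1 : G) ∈ U n) : (1 : G) ∈ bsPlus U k :=
  bsProd_subset_bsPlus 0 (one_mem_bsProd h 0)

lemma one_mem_bsU (h : ∀ n, (1 : G) ∈ U n) : (1 : G) ∈ bsU U k := by
  have h1 := one_mem_bsPlus (U := U) (k := k) h
  have : (1 : G) = 1⁻¹ * 1 := by simp
  rw [this]
  exact mul_mem_mul (Set.inv_mem_inv.2 h1) h1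

lemma bsPlus_mono_fun (h : ∀ n, U n ⊆ V n) : bsPlus U k ⊆ bsPlus V k :=
  Set.iUnion_mono fun j => bsProd_mono_fun h j

lemma bsU_mono_fun (h : ∀ n, U n ⊆ V n) : bsU U k ⊆ bsU V k :=
  mul_subset_mul (Set.inv_subset_inv.2 (bsPlus_mono_fun h)) (bsPlus_mono_fun h)

lemma bsU_subset_iUnion (h1 : ∀ n, (1 : G) ∈ U n) (m : ℕ) :
    bsU U k = ⋃ n, (bsProd U k (n + m))⁻¹ * bsProd U k (n + m) := by
  apply Set.Subset.antisymm
  · rintro x ⟨y, hy, z, hz, rfl⟩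
    rw [Set.mem_inv] at hy
    obtain ⟨i, hi⟩ := Set.mem_iUnion.1 hy
    obtain ⟨j, hj⟩ := Set.mem_iUnion.1 hz
    refine Set.mem_iUnion.2 ⟨i + j, ?_⟩
    have hiN : y⁻¹ ∈ bsProd U k (i + j + m) :=
      bsProd_mono_idx h1 (by omega) hi
    have hjN : z ∈ bsProd U k (i + j + m) :=
      bsProd_mono_idx h1 (by omega) hj
    exact ⟨y, Set.mem_inv.2 hiN, z, hjN, rfl⟩
  · refine Set.iUnion_subset fun n => ?_
    exact mul_subset_mul (Set.inv_subset_inv.2 (bsProd_subset_bsPlus _))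
      (bsProd_subset_bsPlus _)

end bsLemmas

namespace GroupTower
variable {G : Type*} [Group G] (T : GroupTower G)

def pre (n : ℕ) (S : Set G) : Set (T.H n) := ((↑) : T.H n → G) ⁻¹' S
lemma pre_mono {n : ℕ} {S S' : Set G} (h : S ⊆ S') : T.pre n S ⊆ T.pre n S' :=
  Set.preimage_mono h
def opIn (n : ℕ) (S : Set G) : Prop := IsOpen[T.τ n] (T.pre n S)
def cpIn (n : ℕ) (S : Set G) : Prop := @IsCompact _ (T.τ n) (T.pre n S)
lemma H_mono {m n : ℕ} (h : m ≤ n) : T.H m ≤ T.H n := by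
  induction n, h using Nat.le_induction with
  | base => exact le_rfl
  | succ n hmn ih => exact ih.trans (T.mono n)
lemma pre_inv (n : ℕ) (S : Set G) : T.pre n S⁻¹ = (T.pre n S)⁻¹ := rfl
lemma pre_mul {n : ℕ} {A B : Set G} (hA : A ⊆ (T.H n : Set G)) :
    T.pre n (A * B) = T.pre n A * T.pre n B := by
  ext x
  constructor
  · rintro ⟨a, ha, b, hb, hx⟩
    have haH : a ∈ T.H n := hA ha
    have hbH : b ∈ T.H n := by
      have : b = a⁻¹ * (x : G) := by rw [← hx]; group
      rw [this]; exact mul_mem (inv_mem haH) x.2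
    exact ⟨⟨a, haH⟩, ha, ⟨b, hbH⟩, hb, Subtype.ext hx⟩
  · rintro ⟨a, ha, b, hb, hx⟩
    exact ⟨(a : G), ha, (b : G), hb, congrArg Subtype.val hx⟩
lemma pre_coe_image (n : ℕ) (S : Set (T.H n)) :
    T.pre n (((↑) : T.H n → G) '' S) = S :=
  Set.preimage_image_eq S Subtype.coe_injective
lemma coe_image_inv (n : ℕ) (S : Set (T.H n)) :
    (((↑) : T.H n → G) '' S)⁻¹ = ((↑) : T.H n → G) '' S⁻¹ := by
  ext x
  simp only [Set.mem_inv, Set.mem_image]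
  constructor
  · rintro ⟨y, hy, hxy⟩
    refine ⟨y⁻¹, by simpa using hy, ?_⟩
    have : (y : G)⁻¹ = x := by rw [hxy, inv_inv]
    simpa using this
  · rintro ⟨y, hy, rfl⟩
    exact ⟨y⁻¹, by simpa using hy, by simp⟩
lemma subset_of_pre_subset {n : ℕ} {A B : Set G} (hA : A ⊆ (T.H n : Set G))
    (h : T.pre n A ⊆ T.pre n B) : A ⊆ B := fun x hx =>
  h (show ((⟨x, hA hx⟩ : T.H n) : G) ∈ A from hx)
lemma opIn_succ {n : ℕ} {S : Set G} (h : T.opIn (n + 1) S) : T.opIn n S := by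
  have heq : T.pre n S = (Subgroup.inclusion (T.mono n)) ⁻¹' (T.pre (n + 1) S) := rfl
  rw [opIn, heq]
  letI := T.τ n; letI := T.τ (n + 1)
  exact (T.incl_cont n).isOpen_preimage _ h
lemma opIn_of_le {m n : ℕ} (h : m ≤ n) {S : Set G} (hS : T.opIn n S) : T.opIn m S := by
  induction n, h using Nat.le_induction with
  | base => exact hS
  | succ n hmn ih => exact ih (T.opIn_succ hS)
lemma pre_succ_eq_image {n : ℕ} {S : Set G} (hS : S ⊆ (T.H n : Set G)) :
    T.pre (n + 1) S = (Subgroup.inclusion (T.mono n)) '' (T.pre n S) := by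
  ext x
  constructor
  · intro hx
    exact ⟨⟨(x : G), hS hx⟩, hx, Subtype.ext rfl⟩
  · rintro ⟨y, hy, rfl⟩
    exact hy
lemma cpIn_succ {n : ℕ} {S : Set G} (hS : S ⊆ (T.H n : Set G)) (h : T.cpIn n S) :
    T.cpIn (n + 1) S := by
  rw [cpIn, pre_succ_eq_image T hS]
  letI := T.τ n; letI := T.τ (n + 1)
  exact h.image (T.incl_cont n)
lemma cpIn_of_le {m n : ℕ} (h : m ≤ n) {S : Set G} (hS : S ⊆ (T.H m : Set G))
    (hc : T.cpIn m S) : T.cpIn n S := by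
  induction n, h using Nat.le_induction with
  | base => exact hc
  | succ n hmn ih => exact T.cpIn_succ (hS.trans (T.H_mono hmn)) ih

-- new material
variable {U : ℕ → Set G} {k : ℕ}

lemma bsProd_subset_H (hU : ∀ n, U n ⊆ (T.H n : Set G)) :
    ∀ j, bsProd U k j ⊆ (T.H (k + j) : Set G)
  | 0 => hU k
  | j + 1 => by
      rintro x ⟨a, ha, b, hb, rfl⟩
      exact mul_mem (T.mono (k + j) (bsProd_subset_H hU j ha)) (hU (k + (j + 1)) hb)

lemma opIn_bsProd (hU : ∀ n, T.NsMem n (U n)) (j : ℕ) : T.opIn (k + j) (bsProd U k j) := by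
  cases j with
  | zero => exact (hU k).2.1
  | succ j =>
      show T.opIn (k + j + 1) (bsProd U k j * U (k + (j + 1)))
      rw [opIn, T.pre_mul (fun x hx => T.mono (k + j) (T.bsProd_subset_H
        (fun n => (hU n).1) j hx))]
      letI := T.τ (k + j + 1); haveI := T.topGroup (k + j + 1)
      exact IsOpen.mul_left (hU (k + (j + 1))).2.1

lemma opIn_bsU (hU : ∀ n, T.NsMem n (U n)) (m : ℕ) : T.opIn m (bsU U k) := by
  have h1 : ∀ n, (1 : G) ∈ U n := fun n => (hU n).2.2.1
  have hsub : ∀ n, U n ⊆ (T.H n : Set G) := fun n => (hU n).1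
  rw [opIn, bsU_subset_iUnion h1 m, pre, Set.preimage_iUnion]
  letI := T.τ m
  apply isOpen_iUnion
  intro n
  have hsubinv : (bsProd U k (n + m))⁻¹ ⊆ (T.H (k + (n + m)) : Set G) := by
    intro x hx
    have hx' : x⁻¹ ∈ bsProd U k (n + m) := hx
    have hxH := T.bsProd_subset_H hsub (n + m) hx'
    simpa using inv_mem hxH
  have hQ : T.opIn (k + (n + m)) ((bsProd U k (n + m))⁻¹ * bsProd U k (n + m)) := by
    rw [opIn, T.pre_mul hsubinv, pre_inv]
    letI := T.τ (k + (n + m)); haveI := T.topGroup (k + (n + m))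
    exact IsOpen.mul_left (T.opIn_bsProd hU (n + m))
  exact T.opIn_of_le (by omega) hQ

lemma opIn_smul {n : ℕ} {g : G} {S : Set G} (hg : g ∈ T.H n) (hS : T.opIn n S) :
    T.opIn n (g • S) := by
  have heq : T.pre n (g • S) = (fun y : T.H n => (⟨g, hg⟩ : T.H n)⁻¹ * y) ⁻¹' T.pre n S := by
    ext x
    simp only [pre, Set.mem_preimage, Set.mem_smul_set_iff_inv_smul_mem, smul_eq_mul]
    rfl
  rw [opIn, heq]
  letI := T.τ n; haveI := T.topGroup n
  exact (continuous_const.mul continuous_id).isOpen_preimage _ hS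

lemma opIn_mul_right {n : ℕ} {g : G} {S : Set G} (hg : g ∈ T.H n) (hS : T.opIn n S) :
    T.opIn n (S * {g}) := by
  have heq : T.pre n (S * {g}) = (fun y : T.H n => y * (⟨g, hg⟩ : T.H n)⁻¹) ⁻¹' T.pre n S := by
    ext x
    simp only [pre, Set.mem_preimage]
    constructor
    · rintro ⟨a, ha, b, hb, hab⟩
      have hbg : b = g := hb
      have heq2 : ((x * (⟨g, hg⟩ : T.H n)⁻¹ : T.H n) : G) = a := by
        push_cast
        rw [← hab, hbg]; group
      rw [heq2]; exact ha
    · intro hx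
      refine ⟨((x * (⟨g, hg⟩ : T.H n)⁻¹ : T.H n) : G), hx, g, rfl, ?_⟩
      push_cast
      group
  rw [opIn, heq]
  letI := T.τ n; haveI := T.topGroup n
  exact (continuous_id.mul continuous_const).isOpen_preimage _ hS

lemma opInAll_smul {A : Set G} (hA : ∀ n, T.opIn n A) (g : G) :
    ∀ n, T.opIn n (g • A) := by
  intro m
  obtain ⟨n₀, hg⟩ := T.union g
  exact T.opIn_of_le (le_max_left m n₀)
    (T.opIn_smul (T.H_mono (le_max_right m n₀) hg) (hA (max m n₀)))

lemma opInAll_mul_right {A : Set G} (hA : ∀ n, T.opIn n A) (g : G) :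
    ∀ n, T.opIn n (A * {g}) := by
  intro m
  obtain ⟨n₀, hg⟩ := T.union g
  exact T.opIn_of_le (le_max_left m n₀)
    (T.opIn_mul_right (T.H_mono (le_max_right m n₀) hg) (hA (max m n₀)))

/-- invariant carried along the recursive construction: `p.1` is the new compact symmetric
neighborhood `W n`, `p.2` is the accumulated product `C n = W 0 * ⋯ * W n`. -/
def towInv (T : GroupTower G) (O : Set G) (n : ℕ) (p : Set G × Set G) : Prop :=
  p.1 ⊆ (T.H n : Set G) ∧ p.1⁻¹ = p.1 ∧ T.pre n p.1 ∈ @nhds _ (T.τ n) 1 ∧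
  T.cpIn n p.1 ∧ p.2 ⊆ (T.H n : Set G) ∧ T.cpIn n p.2 ∧ (1 : G) ∈ p.2 ∧
  (p.2⁻¹ * p.2) * (p.2⁻¹ * p.2) ⊆ O

lemma towInv_base (hT2 : @T2Space (T.H 0) (T.τ 0))
    (hLC : @LocallyCompactSpace (T.H 0) (T.τ 0))
    {O : Set G} (hO : T.opIn 0 O) (h1 : (1 : G) ∈ O) :
    ∃ p, towInv T O 0 p ∧ p.2 = p.1 := by
  letI := T.τ 0; haveI := T.topGroup 0; haveI := hT2; haveI := hLC
  have hKcpt : IsCompact ({1} : Set (T.H 0)) := isCompact_singleton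
  have hΩ : IsOpen (T.pre 0 O) := hO
  have h1pre : (1 : T.H 0) ∈ T.pre 0 O := by
    show ((1 : T.H 0) : G) ∈ O
    simpa using h1
  have hKK : ({1} : Set (T.H 0)) * {1} ⊆ T.pre 0 O := by
    rw [Set.singleton_mul_singleton, mul_one]
    exact Set.singleton_subset_iff.2 h1pre
  obtain ⟨V, hVo, hV1, hVsub⟩ := bamboo_sandwich2 hKcpt hΩ hKK
  have hVsub' : V * V * (V * V) ⊆ T.pre 0 O := by
    have heq : V * ({1} : Set (T.H 0)) * V = V * V := by
      rw [Set.singleton_one, mul_one]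
    rwa [heq] at hVsub
  obtain ⟨S, hScpt, hSsym, hSnhd, hSV⟩ := bamboo_exists_cpt_symm (hVo.mem_nhds hV1)
  set W : Set G := ((↑) : T.H 0 → G) '' S with hWdef
  have hWH : W ⊆ (T.H 0 : Set G) := by rintro x ⟨y, -, rfl⟩; exact y.2
  have hWsym : W⁻¹ = W := by rw [hWdef, coe_image_inv, hSsym]
  have hpreW : T.pre 0 W = S := T.pre_coe_image 0 S
  have hWWH : W * W ⊆ (T.H 0 : Set G) := by
    rintro x ⟨a, ha, b, hb, rfl⟩
    exact mul_mem (hWH ha) (hWH hb)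
  refine ⟨(W, W), ⟨hWH, hWsym, by rw [hpreW]; exact hSnhd, by rw [cpIn, hpreW]; exact hScpt,
    hWH, by rw [cpIn, hpreW]; exact hScpt,
    ⟨1, mem_of_mem_nhds hSnhd, by simp⟩, ?_⟩, rfl⟩
  show (W⁻¹ * W) * (W⁻¹ * W) ⊆ O
  rw [hWsym]
  refine T.subset_of_pre_subset (n := 0) ?_ ?_
  · rintro x ⟨a, ha, b, hb, rfl⟩
    exact mul_mem (hWWH ha) (hWWH hb)
  · rw [T.pre_mul hWWH, T.pre_mul hWH, hpreW]
    refine Set.Subset.trans ?_ hVsub'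
    exact mul_subset_mul (mul_subset_mul hSV hSV) (mul_subset_mul hSV hSV)

lemma towInv_step {n : ℕ} (hT2 : @T2Space (T.H (n + 1)) (T.τ (n + 1)))
    (hLC : @LocallyCompactSpace (T.H (n + 1)) (T.τ (n + 1)))
    {O : Set G} (hO : T.opIn (n + 1) O) {p : Set G × Set G} (hp : towInv T O n p) :
    ∃ q, towInv T O (n + 1) q ∧ q.2 = p.2 * q.1 := by
  letI := T.τ (n + 1); haveI := T.topGroup (n + 1); haveI := hT2; haveI := hLC
  obtain ⟨hW_H, hWsym, hWnhd, hWcpt, hC_H, hCcpt, hC1, hCO⟩ := hp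
  have hC_H' : p.2 ⊆ (T.H (n + 1) : Set G) := fun x hx => T.mono n (hC_H hx)
  have hCinv_H : p.2⁻¹ ⊆ (T.H (n + 1) : Set G) := by
    intro x hx
    have hx' : x⁻¹ ∈ p.2 := hx
    simpa using inv_mem (hC_H' hx')
  set D : Set G := p.2⁻¹ * p.2 with hDdef
  have hD_H : D ⊆ (T.H (n + 1) : Set G) := by
    rintro x ⟨a, ha, b, hb, rfl⟩
    exact mul_mem (hCinv_H ha) (hC_H' hb)
  have hC' : T.cpIn (n + 1) p.2 := T.cpIn_succ hC_H hCcpt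
  have hpreD : T.pre (n + 1) D = (T.pre (n + 1) p.2)⁻¹ * T.pre (n + 1) p.2 := by
    rw [hDdef, T.pre_mul hCinv_H, pre_inv]
  have hKcpt : IsCompact (T.pre (n + 1) D) := by
    rw [hpreD]; exact hC'.inv.mul hC'
  have hΩ : IsOpen (T.pre (n + 1) O) := hO
  have hKK : T.pre (n + 1) D * T.pre (n + 1) D ⊆ T.pre (n + 1) O := by
    rw [← T.pre_mul hD_H]
    exact T.pre_mono hCO
  obtain ⟨V, hVo, hV1, hVsub⟩ := bamboo_sandwich2 hKcpt hΩ hKK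
  obtain ⟨S, hScpt, hSsym, hSnhd, hSV⟩ := bamboo_exists_cpt_symm (hVo.mem_nhds hV1)
  set W' : Set G := ((↑) : T.H (n + 1) → G) '' S with hWdef'
  have hW'H : W' ⊆ (T.H (n + 1) : Set G) := by rintro x ⟨y, -, rfl⟩; exact y.2
  have hW'sym : W'⁻¹ = W' := by rw [hWdef', coe_image_inv, hSsym]
  have hpreW' : T.pre (n + 1) W' = S := T.pre_coe_image (n + 1) S
  have h1W' : (1 : G) ∈ W' := ⟨1, mem_of_mem_nhds hSnhd, by simp⟩
  refine ⟨(W', p.2 * W'), ⟨hW'H, hW'sym, by rw [hpreW']; exact hSnhd,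
    by rw [cpIn, hpreW']; exact hScpt, ?_, ?_, ?_, ?_⟩, rfl⟩
  · rintro x ⟨a, ha, b, hb, rfl⟩
    exact mul_mem (hC_H' ha) (hW'H hb)
  · show T.cpIn (n + 1) (p.2 * W')
    rw [cpIn, T.pre_mul hC_H', hpreW']
    exact hC'.mul hScpt
  · exact ⟨1, hC1, 1, h1W', by simp⟩
  · show ((p.2 * W')⁻¹ * (p.2 * W')) * ((p.2 * W')⁻¹ * (p.2 * W')) ⊆ O
    have halg : (p.2 * W')⁻¹ * (p.2 * W') = W' * D * W' := by
      rw [mul_inv_rev, hW'sym, hDdef]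
      simp only [mul_assoc]
    rw [halg]
    have hWDW_H : W' * D * W' ⊆ (T.H (n + 1) : Set G) := by
      rintro x ⟨a, ⟨c, hc, d, hd, rfl⟩, b, hb, rfl⟩
      exact mul_mem (mul_mem (hW'H hc) (hD_H hd)) (hW'H hb)
    have hWD_H : W' * D ⊆ (T.H (n + 1) : Set G) := by
      rintro x ⟨c, hc, d, hd, rfl⟩
      exact mul_mem (hW'H hc) (hD_H hd)
    refine T.subset_of_pre_subset (n := n + 1) ?_ ?_
    · rintro x ⟨a, ha, b, hb, rfl⟩
      exact mul_mem (hWDW_H ha) (hWDW_H hb)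
    · rw [T.pre_mul hWDW_H, T.pre_mul hWD_H, T.pre_mul hW'H, hpreW']
      refine Set.Subset.trans ?_ hVsub
      refine mul_subset_mul (mul_subset_mul (mul_subset_mul hSV Subset.rfl) hSV)
        (mul_subset_mul (mul_subset_mul hSV Subset.rfl) hSV)


lemma construction (hT2 : ∀ n, @T2Space (T.H n) (T.τ n))
    (hLC : ∀ n, @LocallyCompactSpace (T.H n) (T.τ n))
    {O : Set G} (hO : ∀ n, T.opIn n O) (h1 : (1 : G) ∈ O) :
    ∃ U : ℕ → Set G, (∀ n, T.NsMem n (U n)) ∧ bsU U 0 ⊆ O ∧ bsU U 0 * bsU U 0 ⊆ O := by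
  classical
  obtain ⟨p₀, hp₀, hp₀eq⟩ := T.towInv_base (hT2 0) (hLC 0) (hO 0) h1
  let seq : ∀ n : ℕ, {p : Set G × Set G // T.towInv O n p} :=
    fun n => Nat.rec (⟨p₀, hp₀⟩ : {p : Set G × Set G // T.towInv O 0 p})
      (fun n s => ⟨(T.towInv_step (hT2 (n + 1)) (hLC (n + 1)) (hO (n + 1)) s.2).choose,
        (T.towInv_step (hT2 (n + 1)) (hLC (n + 1)) (hO (n + 1)) s.2).choose_spec.1⟩) n
  have hlink : ∀ n, (seq (n + 1)).1.2 = (seq n).1.2 * (seq (n + 1)).1.1 := fun n =>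
    (T.towInv_step (hT2 (n + 1)) (hLC (n + 1)) (hO (n + 1)) (seq n).2).choose_spec.2
  have hbase : (seq 0).1.2 = (seq 0).1.1 := hp₀eq
  set W : ℕ → Set G := fun n => (seq n).1.1 with hWdef
  set C : ℕ → Set G := fun n => (seq n).1.2 with hCdef
  have hInv : ∀ n, T.towInv O n (W n, C n) := fun n => (seq n).2
  have h1W : ∀ n, (1 : G) ∈ W n := by
    intro n
    letI := T.τ n
    have h1' : (1 : T.H n) ∈ T.pre n (W n) := mem_of_mem_nhds (hInv n).2.2.1
    simpa [pre] using h1'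
  have hlink' : ∀ n, C (n + 1) = C n * W (n + 1) := fun n => hlink n
  have hbase' : C 0 = W 0 := hbase
  have hCprod : ∀ n, bsProd W 0 n = C n := by
    intro n
    induction n with
    | zero => rw [bsProd_zero]; exact hbase'.symm
    | succ n ih =>
        rw [bsProd_succ, ih, Nat.zero_add, ← hlink' n]
  have hCmono : ∀ i j, i ≤ j → C i ⊆ C j := by
    intro i j hij
    induction j, hij using Nat.le_induction with
    | base => exact Subset.rfl
    | succ j hij ih =>
        refine ih.trans ?_
        rw [hlink' j]
        exact fun x hx => ⟨x, hx, 1, h1W (j + 1), mul_one x⟩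
  have hbigW : bsU W 0 * bsU W 0 ⊆ O := by
    rintro x ⟨y, hy, z, hz, rfl⟩
    obtain ⟨a, ha, b, hb, rfl⟩ := hy
    obtain ⟨c, hc, d, hd, rfl⟩ := hz
    have ha' : a⁻¹ ∈ bsPlus W 0 := ha
    have hc' : c⁻¹ ∈ bsPlus W 0 := hc
    obtain ⟨i₁, hi₁⟩ := Set.mem_iUnion.1 ha'
    obtain ⟨i₂, hi₂⟩ := Set.mem_iUnion.1 hb
    obtain ⟨i₃, hi₃⟩ := Set.mem_iUnion.1 hc'
    obtain ⟨i₄, hi₄⟩ := Set.mem_iUnion.1 hd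
    set N := i₁ + i₂ + i₃ + i₄ with hN
    have hmem : ∀ {i : ℕ} {w : G}, i ≤ N → w ∈ bsProd W 0 i → w ∈ C N := fun hij hw => by
      rw [← hCprod N]
      exact bsProd_mono_idx h1W hij hw
    have hN1 : a⁻¹ ∈ C N := hmem (by omega) hi₁
    have hN2 : b ∈ C N := hmem (by omega) hi₂
    have hN3 : c⁻¹ ∈ C N := hmem (by omega) hi₃
    have hN4 : d ∈ C N := hmem (by omega) hi₄
    exact (hInv N).2.2.2.2.2.2.2
      (mul_mem_mul (mul_mem_mul (Set.mem_inv.2 (by simpa using hN1)) hN2)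
        (mul_mem_mul (Set.mem_inv.2 (by simpa using hN3)) hN4))
  set Un : ℕ → Set G := fun n =>
    ((↑) : T.H n → G) ''
      (@interior _ (T.τ n) (T.pre n (W n)) ∩ (@interior _ (T.τ n) (T.pre n (W n)))⁻¹)
    with hUndef
  have hNs : ∀ n, T.NsMem n (Un n) := by
    intro n
    letI := T.τ n; haveI := T.topGroup n
    set t : Set (T.H n) := interior (T.pre n (W n)) ∩ (interior (T.pre n (W n)))⁻¹ with htdef
    have hpret : T.pre n (Un n) = t := T.pre_coe_image n t
    have h1t : (1 : T.H n) ∈ t := by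
      constructor
      · exact mem_interior_iff_mem_nhds.2 (hInv n).2.2.1
      · show (1 : T.H n)⁻¹ ∈ interior (T.pre n (W n))
        simpa using mem_interior_iff_mem_nhds.2 (hInv n).2.2.1
    refine ⟨?_, ?_, ?_, ?_⟩
    · rintro x ⟨y, -, rfl⟩; exact y.2
    · show IsOpen (T.pre n (Un n))
      rw [hpret]
      exact (isOpen_interior.inter isOpen_interior.inv)
    · exact ⟨1, h1t, by simp⟩
    · show (Un n)⁻¹ = Un n
      rw [hUndef]
      simp only []
      rw [coe_image_inv]
      rw [Set.inter_inv, inv_inv, Set.inter_comm]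
  have hUW : ∀ n, Un n ⊆ W n := by
    intro n
    letI := T.τ n
    refine Subset.trans (Set.image_mono ?_) (Set.image_preimage_subset _ _)
    exact (Set.inter_subset_left).trans interior_subset
  have hUmono : bsU Un 0 ⊆ bsU W 0 := bsU_mono_fun hUW
  have h1bsU : (1 : G) ∈ bsU W 0 := one_mem_bsU h1W
  have hWO : bsU W 0 ⊆ O := fun x hx => by
    have := hbigW (mul_mem_mul hx h1bsU)
    simpa using this
  exact ⟨Un, hNs, hUmono.trans hWO,
    fun x hx => hbigW (mul_subset_mul hUmono hUmono hx)⟩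

end GroupTower

/-- For a tower of Hausdorff locally compact groups, `τind = τBS`, this
topology is a group topology, and `(G, τind) = glim G_n`. -/
theorem statement_11 {G : Type*} [Group G] (T : GroupTower G)
    (hT2 : ∀ n, @T2Space (T.H n) (T.τ n))
    (hLC : ∀ n, @LocallyCompactSpace (T.H n) (T.τ n))
    (τBS : TopologicalSpace G) (hBS : T.IsBambooShoot τBS)
    (τind : TopologicalSpace G) (hind : T.IsIndTop τind) :
    τind = τBS ∧ @IsTopologicalGroup G τind _ ∧ T.IsGLim τind := by
  letI : TopologicalSpace G := τind
  have hOp : ∀ A : Set G, IsOpen A ↔ ∀ n, T.opIn n A := hind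
  have hsmul : ∀ (g : G) (A : Set G), IsOpen A → IsOpen (g • A) :=
    fun g A hA => (hOp _).2 (T.opInAll_smul (fun n => (hOp A).1 hA n) g)
  have hmulr : ∀ (g : G) (A : Set G), IsOpen A → IsOpen (A * {g}) :=
    fun g A hA => (hOp _).2 (T.opInAll_mul_right (fun n => (hOp A).1 hA n) g)
  have hopen_bsU : ∀ (U : ℕ → Set G) (k : ℕ), (∀ n, T.NsMem n (U n)) → IsOpen (bsU U k) :=
    fun U k hU => (hOp _).2 fun m => T.opIn_bsU hU m
  -- the neighborhoods of the inductive limit topology coincide with the Bamboo-Shoot ones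
  have hnhds : ∀ g : G, 𝓝 g = @nhds G τBS g := by
    intro g
    apply le_antisymm
    · refine ((hBS g).ge_iff).2 ?_
      rintro ⟨U, k⟩ hU
      have hOpen : IsOpen (g • bsU U k) := hsmul g _ (hopen_bsU U k hU)
      have hg : g ∈ g • bsU U k :=
        ⟨1, one_mem_bsU fun n => (hU n).2.2.1, mul_one g⟩
      exact hOpen.mem_nhds hg
    · intro s hs
      obtain ⟨O, hOs, hOopen, hgO⟩ := mem_nhds_iff.1 hs
      have hO' : IsOpen (g⁻¹ • O) := hsmul g⁻¹ O hOopen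
      have h1O : (1 : G) ∈ g⁻¹ • O := ⟨g, hgO, inv_mul_cancel g⟩
      obtain ⟨U, hNs, hUO, -⟩ :=
        T.construction hT2 hLC (fun n => (hOp _).1 hO' n) h1O
      refine ((hBS g).mem_iff).2 ⟨(U, 0), hNs, ?_⟩
      have hsub : g • bsU U 0 ⊆ g • (g⁻¹ • O) := Set.smul_set_mono hUO
      rw [smul_inv_smul] at hsub
      exact hsub.trans hOs
  have h_eq : τind = τBS := TopologicalSpace.ext_nhds hnhds
  -- τind is a group topology
  have hTG : @IsTopologicalGroup G τind _ := by
    refine IsTopologicalGroup.of_nhds_one ?_ ?_ ?_ ?_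
    · -- multiplication
      intro s hs
      obtain ⟨O, hOs, hOopen, h1O⟩ := mem_nhds_iff.1 hs
      obtain ⟨U, hNs, hUO, hUUO⟩ :=
        T.construction hT2 hLC (fun n => (hOp _).1 hOopen n) h1O
      have hV : bsU U 0 ∈ 𝓝 (1 : G) :=
        (hopen_bsU U 0 hNs).mem_nhds (one_mem_bsU fun n => (hNs n).2.2.1)
      rw [Filter.mem_map]
      refine Filter.mem_of_superset (Filter.prod_mem_prod hV hV) ?_
      rintro ⟨a, b⟩ ⟨ha, hb⟩
      exact hOs (hUUO (mul_mem_mul ha hb))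
    · -- inversion
      intro s hs
      obtain ⟨O, hOs, hOopen, h1O⟩ := mem_nhds_iff.1 hs
      have hOinv : IsOpen O⁻¹ := by
        refine (hOp _).2 fun n => ?_
        rw [GroupTower.opIn, GroupTower.pre_inv]
        letI := T.τ n; haveI := T.topGroup n
        exact ((hOp O).1 hOopen n).inv
      rw [Filter.mem_map]
      refine Filter.mem_of_superset (hOinv.mem_nhds (by simpa using h1O)) ?_
      intro x hx
      exact hOs hx
    · -- left translations
      intro x₀
      ext s
      rw [Filter.mem_map]
      constructor
      · intro hs
        obtain ⟨O, hOs, hOopen, hx₀O⟩ := mem_nhds_iff.1 hs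
        have hOpen : IsOpen (x₀⁻¹ • O) := hsmul x₀⁻¹ O hOopen
        have h1 : (1 : G) ∈ x₀⁻¹ • O := ⟨x₀, hx₀O, inv_mul_cancel x₀⟩
        refine Filter.mem_of_superset (hOpen.mem_nhds h1) ?_
        rintro y ⟨o, ho, rfl⟩
        show x₀ * (x₀⁻¹ • o) ∈ s
        have : x₀ * (x₀⁻¹ • o) = o := by
          rw [smul_eq_mul]; group
        rw [this]
        exact hOs ho
      · intro hs
        obtain ⟨O, hOsub, hOopen, h1O⟩ := mem_nhds_iff.1 hs
        have hOpen : IsOpen (x₀ • O) := hsmul x₀ O hOopen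
        have hx₀mem : x₀ ∈ x₀ • O := ⟨1, h1O, mul_one x₀⟩
        refine Filter.mem_of_superset (hOpen.mem_nhds hx₀mem) ?_
        rintro y ⟨o, ho, rfl⟩
        exact hOsub ho
    · -- conjugation
      intro x₀
      intro s hs
      rw [Filter.mem_map]
      obtain ⟨O, hOs, hOopen, h1O⟩ := mem_nhds_iff.1 hs
      have hOpen : IsOpen ((x₀⁻¹ • O) * {x₀}) := hmulr x₀ _ (hsmul x₀⁻¹ O hOopen)
      have h1 : (1 : G) ∈ (x₀⁻¹ • O) * {x₀} :=
        ⟨x₀⁻¹, ⟨1, h1O, by simp [smul_eq_mul]⟩, x₀, rfl, by group⟩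
      refine Filter.mem_of_superset (hOpen.mem_nhds h1) ?_
      rintro y ⟨a, ⟨o, ho, rfl⟩, b, hb, rfl⟩
      have hbx : b = x₀ := hb
      show x₀ * (x₀⁻¹ • o * b) * x₀⁻¹ ∈ s
      have : x₀ * (x₀⁻¹ • o * b) * x₀⁻¹ = o := by
        rw [hbx, smul_eq_mul]; group
      rw [this]
      exact hOs ho
  refine ⟨h_eq, hTG, ⟨hTG, fun n => ?_⟩, ?_⟩
  · exact (@continuous_def _ _ (T.τ n) τind ((↑) : T.H n → G)).2
      fun A hA => (hind A).1 hA n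
  · intro t' ht' A hA
    exact (hind A).2 fun n =>
      @Continuous.isOpen_preimage _ _ (T.τ n) t' _ (ht'.2 n) A hA
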